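/- If (c⁽¹⁾, κ⁽¹⁾, a) satisfies the twisted cocycle conditions d_a²κ⁽¹⁾ = 0 and d_a³c⁽¹⁾(g,h,k,f) = (−1)^{κ⁽¹⁾(g,h)·(κ⁽¹⁾)^{a(gh)}(k,f)}, and (c⁽²⁾, κ⁽²⁾) is obtained from (c⁽¹⁾, κ⁽¹⁾) via m ∈ C¹(G,ℤ₂⊕ℤ₂) and σ ∈ C²(G,U(1)⊕U(1)) by κ⁽²⁾ = d_a¹m + κ⁽¹⁾ and c⁽²⁾(g,h,k) = (−1)^{κ⁽¹⁾(g,h)·m^{a(gh)}(k)}·(−1)^{m(g)·(κ⁽²⁾)^{a(g)}(h,k)}·(d_a²σ)(g,h,k)·c⁽¹⁾(g,h,k), then (c⁽²⁾, κ⁽²⁾, a) also satisfies d_a²κ⁽²⁾ = 0 and d_a³c⁽²⁾(g,h,k,f) = (−1)^{κ⁽²⁾(g,h)·(κ⁽²⁾)^{a(gh)}(k,f)}. -/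

import Mathlib

/-- The swap action of `ZMod 2` on `A ⊕ A`. -/
def swapP {A : Type*} (t : ZMod 2) (x : A × A) : A × A :=
  if t = 0 then x else (x.2, x.1)

/-- `-1` as an element of the circle group `U(1)`. -/
noncomputable def neg1 : Circle :=
  ⟨-1, by rw [Submonoid.unitSphere]; simp [mem_sphere_zero_iff_norm]⟩

/-- `(-1)^t ∈ U(1)` for `t ∈ ℤ₂`. -/
noncomputable def sgn (t : ZMod 2) : Circle := neg1 ^ t.val

/-- Componentwise `(-1)^x ∈ U(1) ⊕ U(1)` for `x ∈ ℤ₂ ⊕ ℤ₂`. -/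
noncomputable def sgn2 (x : ZMod 2 × ZMod 2) : Circle × Circle := (sgn x.1, sgn x.2)

/-- Twisted degree-1 differential on `ℤ₂ ⊕ ℤ₂`-valued 1-cochains. -/
def ad1 {G : Type*} [Group G] (a : G → ZMod 2) (m : G → ZMod 2 × ZMod 2) :
    G → G → ZMod 2 × ZMod 2 :=
  fun g h => swapP (a g) (m h) + m g - m (g * h)

/-- Twisted degree-2 differential on `ℤ₂ ⊕ ℤ₂`-valued 2-cochains. -/
def ad2 {G : Type*} [Group G] (a : G → ZMod 2) (y : G → G → ZMod 2 × ZMod 2) :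
    G → G → G → ZMod 2 × ZMod 2 :=
  fun g h k => swapP (a g) (y h k) + y g (h * k) - y (g * h) k - y g h

/-- Twisted degree-2 differential on `U(1) ⊕ U(1)`-valued 2-cochains. -/
def d2 {G A : Type*} [Group G] [CommGroup A] (a : G → ZMod 2)
    (y : G → G → A × A) : G → G → G → A × A :=
  fun g h k => swapP (a g) (y h k) * y g (h * k) * (y (g * h) k)⁻¹ * (y g h)⁻¹

/-- Twisted degree-3 differential on `U(1) ⊕ U(1)`-valued 3-cochains. -/
def d3 {G A : Type*} [Group G] [CommGroup A] (a : G → ZMod 2)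
    (z : G → G → G → A × A) : G → G → G → G → A × A :=
  fun g h k f =>
    swapP (a g) (z h k f) * z g (h * k) f * z g h k * (z (g * h) k f)⁻¹ * (z g h (k * f))⁻¹

/-- The cocycle-type conditions defining `\widetilde{PD}_0(G)`:
`d_a² κ = 0` and `d_a³ c(g,h,k,f) = (-1)^{κ(g,h)·κ^{a(gh)}(k,f)}`. -/
def PDCond {G : Type*} [Group G] (a : G → ZMod 2)
    (c : G → G → G → Circle × Circle) (κ : G → G → ZMod 2 × ZMod 2) : Prop :=
  (∀ g h k : G, ad2 a κ g h k = 0) ∧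
  (∀ g h k f : G, d3 a c g h k f = sgn2 (κ g h * swapP (a (g * h)) (κ k f)))

/-- A triple `(c, κ, a)` as in the definition of `\widetilde{PD}_0(G)`. -/
def Triple (G : Type*) [Group G] :=
  (G → G → G → Circle × Circle) × (G → G → ZMod 2 × ZMod 2) × (G → ZMod 2)

/-- The relation `∼_{PD_0(G)}` on triples `(c, κ, a)`. -/
def PDRel {G : Type*} [Group G] (p q : Triple G) : Prop :=
  p.2.2 = q.2.2 ∧
  ∃ (m : G → ZMod 2 × ZMod 2) (σ : G → G → Circle × Circle),
    (∀ g h : G, q.2.1 g h = ad1 p.2.2 m g h + p.2.1 g h) ∧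
    (∀ g h k : G,
      q.1 g h k =
        sgn2 (p.2.1 g h * swapP (p.2.2 (g * h)) (m k)) *
          sgn2 (m g * swapP (p.2.2 g) (q.2.1 h k)) *
          d2 p.2.2 σ g h k * p.1 g h k)

/-! `c₂` differs from `c₁` by the coboundary `d_a² σ`, which `d_a³` kills, and by the signs
`(-1)^{κ₁ ∪ m}` and `(-1)^{m ∪ κ₂}`. Since `κ₁` and `κ₂` are cocycles, the Leibniz rule gives
`d_a³(κ₁ ∪ m) = κ₁ ∪ d_a¹m` and `d_a³(m ∪ κ₂) = d_a¹m ∪ κ₂`, and these two add up to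
`κ₂ ∪ κ₂ - κ₁ ∪ κ₁` because `κ₂ = d_a¹m + κ₁`. -/

section SwapAction

variable {A : Type*}

lemma swapP_zero [Zero A] (t : ZMod 2) : swapP t (0 : A × A) = 0 := by
  unfold swapP; split <;> rfl

lemma swapP_add [Add A] (t : ZMod 2) (x y : A × A) :
    swapP t (x + y) = swapP t x + swapP t y := by
  unfold swapP; split <;> rfl

lemma swapP_sub [Sub A] (t : ZMod 2) (x y : A × A) :
    swapP t (x - y) = swapP t x - swapP t y := by
  unfold swapP; split <;> rfl

lemma swapP_mul [Mul A] (t : ZMod 2) (x y : A × A) :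
    swapP t (x * y) = swapP t x * swapP t y := by
  unfold swapP; split <;> rfl

lemma swapP_inv [Inv A] (t : ZMod 2) (x : A × A) :
    swapP t x⁻¹ = (swapP t x)⁻¹ := by
  unfold swapP; split <;> rfl

lemma swapP_swapP (s t : ZMod 2) (x : A × A) :
    swapP s (swapP t x) = swapP (s + t) x := by
  fin_cases s <;> fin_cases t <;> simp [swapP] <;> rfl

end SwapAction

lemma neg1_sq : neg1 ^ 2 = 1 := by
  rw [← Circle.coe_inj, Circle.coe_pow]
  simp [neg1]

lemma sgn_add (s t : ZMod 2) : sgn (s + t) = sgn s * sgn t := by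
  rw [sgn, sgn, sgn, ZMod.val_add, ← pow_add, ← pow_eq_pow_mod _ neg1_sq]

lemma sgn_neg (t : ZMod 2) : sgn (-t) = (sgn t)⁻¹ :=
  eq_inv_of_mul_eq_one_left (by rw [← sgn_add, neg_add_cancel]; rfl)

lemma sgn_sub (s t : ZMod 2) : sgn (s - t) = sgn s * (sgn t)⁻¹ := by
  rw [sub_eq_add_neg, sgn_add, sgn_neg]

lemma sgn2_add (x y : ZMod 2 × ZMod 2) : sgn2 (x + y) = sgn2 x * sgn2 y :=
  Prod.ext (sgn_add _ _) (sgn_add _ _)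

lemma sgn2_sub (x y : ZMod 2 × ZMod 2) : sgn2 (x - y) = sgn2 x * (sgn2 y)⁻¹ :=
  Prod.ext (sgn_sub _ _) (sgn_sub _ _)

lemma sgn2_swapP (t : ZMod 2) (x : ZMod 2 × ZMod 2) :
    sgn2 (swapP t x) = swapP t (sgn2 x) := by
  unfold swapP; split <;> rfl

section Cochains

variable {G : Type*} [Group G]

def ad3 (a : G → ZMod 2) (z : G → G → G → ZMod 2 × ZMod 2) :
    G → G → G → G → ZMod 2 × ZMod 2 :=
  fun g h k f => swapP (a g) (z h k f) + z g (h * k) f + z g h k - z (g * h) k f - z g h (k * f)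

/- `cupPQ a x y` is the cup product of a `p`-cochain `x` with a `q`-cochain `y` for the twisted
action: `(x ∪ y)(g₁, …, g_{p+q}) = x(g₁, …, g_p) · (g₁ ⋯ g_p) • y(g_{p+1}, …, g_{p+q})`. -/

def cup21 (a : G → ZMod 2) (x : G → G → ZMod 2 × ZMod 2) (y : G → ZMod 2 × ZMod 2) :
    G → G → G → ZMod 2 × ZMod 2 :=
  fun g h k => x g h * swapP (a (g * h)) (y k)

def cup12 (a : G → ZMod 2) (y : G → ZMod 2 × ZMod 2) (x : G → G → ZMod 2 × ZMod 2) :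
    G → G → G → ZMod 2 × ZMod 2 :=
  fun g h k => y g * swapP (a g) (x h k)

def cup22 (a : G → ZMod 2) (x y : G → G → ZMod 2 × ZMod 2) :
    G → G → G → G → ZMod 2 × ZMod 2 :=
  fun g h k f => x g h * swapP (a (g * h)) (y k f)

lemma ad2_add (a : G → ZMod 2) (x y : G → G → ZMod 2 × ZMod 2) :
    ad2 a (x + y) = ad2 a x + ad2 a y := by
  funext g h k
  simp only [ad2, Pi.add_apply, swapP_add]
  abel

lemma ad2_ad1 {a : G → ZMod 2} (ha : ∀ g h, a (g * h) = a g + a h)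
    (m : G → ZMod 2 × ZMod 2) : ad2 a (ad1 a m) = 0 := by
  funext g h k
  simp only [ad2, ad1, swapP_add, swapP_sub, swapP_swapP, ← ha, mul_assoc, Pi.zero_apply]
  abel

lemma ad3_cup21 {a : G → ZMod 2} (ha : ∀ g h, a (g * h) = a g + a h)
    {x : G → G → ZMod 2 × ZMod 2} (hx : ad2 a x = 0) (y : G → ZMod 2 × ZMod 2) :
    ad3 a (cup21 a x y) = cup22 a x (ad1 a y) := by
  funext g h k f
  have hxghk := congrFun₃ hx g h k
  simp only [ad2, Pi.zero_apply] at hxghk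
  simp only [ad3, cup21, cup22, ad1, swapP_add, swapP_sub, swapP_mul, swapP_swapP, ← ha, mul_assoc]
  linear_combination swapP (a (g * (h * k))) (y f) * hxghk

lemma ad3_cup12 {a : G → ZMod 2} (ha : ∀ g h, a (g * h) = a g + a h)
    (y : G → ZMod 2 × ZMod 2) {x : G → G → ZMod 2 × ZMod 2} (hx : ad2 a x = 0) :
    ad3 a (cup12 a y x) = cup22 a (ad1 a y) x := by
  funext g h k f
  have hxhkf := congrArg (swapP (a g)) (congrFun₃ hx h k f)
  simp only [ad2, Pi.zero_apply, swapP_add, swapP_sub, swapP_swapP, swapP_zero, ← ha] at hxhkf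
  simp only [ad3, cup12, cup22, ad1, swapP_mul, swapP_swapP, ← ha]
  linear_combination -(y g) * hxhkf

lemma cup22_add_left (a : G → ZMod 2) (x y z : G → G → ZMod 2 × ZMod 2)
    (g h k f : G) : cup22 a (x + y) z g h k f = cup22 a x z g h k f + cup22 a y z g h k f := by
  simp only [cup22, Pi.add_apply, add_mul]

lemma cup22_add_right (a : G → ZMod 2) (x y z : G → G → ZMod 2 × ZMod 2)
    (g h k f : G) : cup22 a x (y + z) g h k f = cup22 a x y g h k f + cup22 a x z g h k f := by
  simp only [cup22, Pi.add_apply, swapP_add, mul_add]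

variable {A : Type*} [CommGroup A]

lemma d3_mul (a : G → ZMod 2) (x y : G → G → G → A × A) (g h k f : G) :
    d3 a (x * y) g h k f = d3 a x g h k f * d3 a y g h k f := by
  simp only [d3, Pi.mul_apply, swapP_mul, mul_inv]
  ac_rfl

lemma d3_d2 {a : G → ZMod 2} (ha : ∀ g h, a (g * h) = a g + a h) (σ : G → G → A × A)
    (g h k f : G) : d3 a (d2 a σ) g h k f = 1 := by
  simp only [d3, d2, swapP_mul, swapP_inv, mul_inv_rev, swapP_swapP, ← ha, mul_assoc]
  apply Additive.ofMul.injective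
  simp only [ofMul_mul, ofMul_inv, ofMul_one]
  abel

lemma d3_sgn2 (a : G → ZMod 2) (z : G → G → G → ZMod 2 × ZMod 2) (g h k f : G) :
    d3 a (fun g h k => sgn2 (z g h k)) g h k f = sgn2 (ad3 a z g h k f) := by
  simp only [d3, ad3, sgn2_sub, sgn2_add, sgn2_swapP]

end Cochains

theorem stmt3_general {G : Type*} [Group G]
    (a : G → ZMod 2) (ha : ∀ g h, a (g * h) = a g + a h)
    (c₁ c₂ : G → G → G → Circle × Circle) (κ₁ κ₂ : G → G → ZMod 2 × ZMod 2)
    (hcond : PDCond a c₁ κ₁)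
    (m : G → ZMod 2 × ZMod 2) (σ : G → G → Circle × Circle)
    (hκ : ∀ g h, κ₂ g h = ad1 a m g h + κ₁ g h)
    (hc : ∀ g h k,
      c₂ g h k =
        sgn2 (κ₁ g h * swapP (a (g * h)) (m k)) *
          sgn2 (m g * swapP (a g) (κ₂ h k)) * d2 a σ g h k * c₁ g h k) :
    PDCond a c₂ κ₂ := by
  obtain ⟨hκ₁, hc₁⟩ := hcond
  replace hκ : κ₂ = ad1 a m + κ₁ := funext₂ hκ
  replace hκ₁ : ad2 a κ₁ = 0 := funext₃ hκ₁
  have hκ₂ : ad2 a κ₂ = 0 := by rw [hκ, ad2_add, ad2_ad1 ha, hκ₁, add_zero]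
  replace hc : c₂ = (fun g h k => sgn2 (cup21 a κ₁ m g h k)) *
      (fun g h k => sgn2 (cup12 a m κ₂ g h k)) * d2 a σ * c₁ := funext₃ hc
  refine ⟨congrFun₃ hκ₂, fun g h k f => ?_⟩
  have hcup : cup22 a κ₁ (ad1 a m) g h k f + cup22 a (ad1 a m) κ₂ g h k f +
      cup22 a κ₁ κ₁ g h k f = cup22 a κ₂ κ₂ g h k f := by
    rw [hκ]
    simp only [cup22_add_left, cup22_add_right]
    abel
  rw [hc, d3_mul, d3_mul, d3_mul, d3_sgn2, d3_sgn2, ad3_cup21 ha hκ₁, ad3_cup12 ha m hκ₂,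
    d3_d2 ha, mul_one, hc₁, ← sgn2_add, ← sgn2_add]
  exact congrArg sgn2 hcup

/-- if `(c¹, κ¹, a)` satisfies the twisted cocycle conditions and
`(c², κ²)` is obtained from it via `m ∈ C¹(G,ℤ₂⊕ℤ₂)` and `σ ∈ C²(G,U(1)⊕U(1))`,
then `(c², κ², a)` also satisfies the twisted cocycle conditions. -/
theorem stmt3 {G : Type*} [Group G] [Fintype G]
    (a : G → ZMod 2) (ha : ∀ g h, a (g * h) = a g + a h)
    (c₁ c₂ : G → G → G → Circle × Circle) (κ₁ κ₂ : G → G → ZMod 2 × ZMod 2)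
    (hcond : PDCond a c₁ κ₁)
    (m : G → ZMod 2 × ZMod 2) (σ : G → G → Circle × Circle)
    (hκ : ∀ g h, κ₂ g h = ad1 a m g h + κ₁ g h)
    (hc : ∀ g h k,
      c₂ g h k =
        sgn2 (κ₁ g h * swapP (a (g * h)) (m k)) *
          sgn2 (m g * swapP (a g) (κ₂ h k)) * d2 a σ g h k * c₁ g h k) :
    PDCond a c₂ κ₂ :=
  stmt3_general a ha c₁ c₂ κ₁ κ₂ hcond m σ hκ hc
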